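/- Let M ≥ 1 be an integer, P > 0, f > 0, α > 0, R real, and let n ≥ 3 be a natural number. Then ∑_{β=2}^{n−1} (R − D(β)) ≥ (n − 2)·(R − Δ̃) − ((M−1)/(M f))·log(n − 1), where D(β) := log((1 + (P/M)·(M−1)/(1 + β f P) + α f P)/(1 + α f P/(1 + P/M))) and Δ̃ := log((1 + α f P)/(1 + α f P/(1 + P/M))). -/

import Mathlib

/-!
Each training-cycle loss exceeds the invariant loss by a logarithm of the form
`log (1 + s / (1 + αfP)) ≤ s ≤ (M - 1) / (M f β)`, so the losses over cycles `β = 2, …, n - 1`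
exceed `(n - 2) Δ̃` by at most `(M - 1) / (M f)` times the tail `∑_{β=2}^{n-1} 1/β` of the
harmonic series, which is at most `log (n - 1)`.
-/

open Real Finset

lemma sum_Icc_two_inv_le_log (n : ℕ) : ∑ k ∈ Icc 2 n, (k : ℝ)⁻¹ ≤ log n := by
  rcases Nat.eq_zero_or_pos n with rfl | hn
  · simp
  have h := harmonic_le_one_add_log n
  rw [harmonic_eq_sum_Icc, ← insert_Icc_add_one_left_eq_Icc hn, sum_insert (by simp)] at h
  push_cast at h
  linarith

lemma log_add_le_log_add_of_one_le {y t : ℝ} (hy : 1 ≤ y) (ht : 0 ≤ t) :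
    log (y + t) ≤ log y + t := by
  have hy0 : 0 < y := by linarith
  have h := log_le_sub_one_of_pos (show 0 < (y + t) / y by positivity)
  rw [log_div (by linarith) hy0.ne', add_div, div_self hy0.ne', add_sub_cancel_left] at h
  linarith [div_le_self ht hy]

-- `D(β)` and `Δ̃` of the paper.
noncomputable def rateLossBound (M : ℕ) (P f α b : ℝ) : ℝ :=
  log ((1 + (P / M) * ((M : ℝ) - 1) / (1 + b * f * P) + α * f * P) /
    (1 + α * f * P / (1 + P / M)))

noncomputable def iniRateLoss (M : ℕ) (P f α : ℝ) : ℝ :=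
  log ((1 + α * f * P) / (1 + α * f * P / (1 + P / M)))

lemma rateLossBound_le {M : ℕ} (hM : 1 ≤ M) {P f α b : ℝ} (hP : 0 < P) (hf : 0 < f)
    (hα : 0 < α) (hb : 0 < b) :
    rateLossBound M P f α b ≤ iniRateLoss M P f α + ((M : ℝ) - 1) / (M * f) * b⁻¹ := by
  have hM1 : (1 : ℝ) ≤ M := by exact_mod_cast hM
  have hc : 0 < α * f * P := by positivity
  have hs : 0 ≤ (P / M) * ((M : ℝ) - 1) / (1 + b * f * P) := by
    have : 0 ≤ (M : ℝ) - 1 := by linarith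
    positivity
  have hd : 0 < 1 + α * f * P / (1 + P / M) := by positivity
  unfold rateLossBound iniRateLoss
  rw [log_div (by positivity) hd.ne', log_div (by positivity) hd.ne', add_right_comm]
  calc log (1 + α * f * P + (P / M) * ((M : ℝ) - 1) / (1 + b * f * P)) - log _
      ≤ log (1 + α * f * P) + (P / M) * ((M : ℝ) - 1) / (1 + b * f * P) - log _ := by
        gcongr
        exact log_add_le_log_add_of_one_le (by linarith) hs
    _ ≤ log (1 + α * f * P) + (P / M) * ((M : ℝ) - 1) / (b * f * P) - log _ := by
        gcongr
        linarith
    _ = _ := by field_simp; ring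

/-- core of the Proposition on the spectral efficiency gain of
full-duplex CAB over half-duplex, Appendix E.
`∑_{β=2}^{n−1} (R − D(β)) ≥ (n−2)(R − Δ̃) − ((M−1)/(Mf))·log(n−1)`. -/
theorem stmt_14 (M : ℕ) (hM : 1 ≤ M) (P f α R : ℝ) (hP : 0 < P) (hf : 0 < f) (hα : 0 < α)
    (n : ℕ) (hn : 3 ≤ n) :
    ∑ β ∈ Finset.Icc 2 (n - 1),
        (R - Real.log ((1 + (P / M) * ((M : ℝ) - 1) / (1 + (β : ℝ) * f * P) + α * f * P) /
          (1 + α * f * P / (1 + P / M))))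
      ≥ ((n : ℝ) - 2) *
          (R - Real.log ((1 + α * f * P) / (1 + α * f * P / (1 + P / M)))) -
        (((M : ℝ) - 1) / ((M : ℝ) * f)) * Real.log ((n : ℝ) - 1) := by
  set K := ((M : ℝ) - 1) / ((M : ℝ) * f)
  change ∑ β ∈ Icc 2 (n - 1), (R - rateLossBound M P f α β)
    ≥ (n - 2) * (R - iniRateLoss M P f α) - K * log (n - 1)
  have hK : 0 ≤ K := div_nonneg (sub_nonneg.mpr (Nat.one_le_cast.mpr hM)) (by positivity)
  have hcard : (#(Icc 2 (n - 1)) : ℝ) = n - 2 := by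
    rw [Nat.card_Icc, show n - 1 + 1 - 2 = n - 2 by omega, Nat.cast_sub (by omega)]
    norm_num
  have hloss : ∑ β ∈ Icc 2 (n - 1), rateLossBound M P f α β
      ≤ ∑ β ∈ Icc 2 (n - 1), (iniRateLoss M P f α + K * (β : ℝ)⁻¹) :=
    sum_le_sum fun β hβ ↦ rateLossBound_le hM hP hf hα (by
      have := (mem_Icc.mp hβ).1; positivity)
  have hharm : ∑ β ∈ Icc 2 (n - 1), (β : ℝ)⁻¹ ≤ log ((n : ℝ) - 1) := by
    simpa [Nat.cast_pred (by omega : 0 < n)] using sum_Icc_two_inv_le_log (n - 1)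
  rw [sum_add_distrib, sum_const, nsmul_eq_mul, ← mul_sum, hcard] at hloss
  rw [sum_sub_distrib, sum_const, nsmul_eq_mul, hcard]
  linarith [mul_le_mul_of_nonneg_left hharm hK]
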